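/- Let $\mu$ be a probability distribution on $\{0,1\}^n$ that is invariant under all permutations of the coordinates and invariant under the global flip $x \mapsto \mathbf{1} - x$ (replacing every coordinate $x_i$ by $1 - x_i$). Then for every monotone set $B \subseteq \{0,1\}^n$, $\mu\big(B \cap \{x : \textstyle\sum_i x_i > n/2\}\big) \ge \mu\big(B \cap \{x : \textstyle\sum_i x_i < n/2\}\big)$. -/

import Mathlib

/-- A set `B ⊆ {0,1}^n` is monotone if `x ∈ B` and `x ≤ y` (coordinatewise)
imply `y ∈ B`. -/
def IsMonotoneSet {n : ℕ} (B : Finset (Fin n → Bool)) : Prop :=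
  ∀ x ∈ B, ∀ y : Fin n → Bool, (∀ i, x i ≤ y i) → y ∈ B

/-- Number of coordinates equal to `1`. -/
def countOnes {n : ℕ} (x : Fin n → Bool) : ℕ :=
  (Finset.univ.filter fun i => x i = true).card

/-!
Both sides are sums of `μ` over points of `B`, and `μ` only depends on the number `k` of ones of a
point, with levels `k` and `n - k` carrying the same mass because of the flip. It therefore suffices
that a monotone `B` has at least as many points with `n - k` ones as with `k` ones when `2 * k ≤ n`.
Identifying a point with its set of ones turns `B` into an upper set `𝒜` of finsets, whose slice
densities `#(𝒜 # k) / n.choose k` are nondecreasing in `k` by the local LYM inequality applied to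
the lower set of complements; as `n.choose k = n.choose (n - k)`, the claim follows.
-/

open Finset
open scoped FinsetFamily

namespace Finset

variable {𝕜 α : Type*} [Semifield 𝕜] [LinearOrder 𝕜] [IsStrictOrderedRing 𝕜]
  [DecidableEq α] {𝒜 : Finset (Finset α)} {i j : ℕ}

lemma shadow_slice_subset_of_isLowerSet (h𝒜 : IsLowerSet (𝒜 : Set (Finset α))) (r : ℕ) :
    ∂ (𝒜 # (r + 1)) ⊆ 𝒜 # r := by
  intro t ht
  obtain ⟨s, hs, a, ha, rfl⟩ := mem_shadow_iff.1 ht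
  rw [mem_slice] at hs ⊢
  exact ⟨h𝒜 (erase_subset a s) hs.1, by rw [card_erase_of_mem ha, hs.2]; rfl⟩

variable [Fintype α]

lemma card_slice_div_choose_antitone_of_isLowerSet (h𝒜 : IsLowerSet (𝒜 : Set (Finset α)))
    (hij : i ≤ j) :
    (#(𝒜 # j) : 𝕜) / (Fintype.card α).choose j ≤ #(𝒜 # i) / (Fintype.card α).choose i := by
  induction j, hij using Nat.le_induction with
  | base => rfl
  | succ j _ ih =>
    calc (#(𝒜 # (j + 1)) : 𝕜) / (Fintype.card α).choose (j + 1)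
        ≤ #(∂ (𝒜 # (j + 1))) / (Fintype.card α).choose j :=
          card_div_choose_le_card_shadow_div_choose j.succ_ne_zero sized_slice
      _ ≤ #(𝒜 # j) / (Fintype.card α).choose j := by
          gcongr; exact shadow_slice_subset_of_isLowerSet h𝒜 j
      _ ≤ _ := ih

lemma IsUpperSet.isLowerSet_compls (h𝒜 : IsUpperSet (𝒜 : Set (Finset α))) :
    IsLowerSet (𝒜ᶜˢ : Set (Finset α)) := by
  intro s t hts hs
  rw [mem_coe, mem_compls] at hs ⊢
  exact h𝒜 (compl_le_compl hts) hs

lemma slice_compls_card_sub (r : ℕ) (hr : r ≤ Fintype.card α) :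
    𝒜ᶜˢ # (Fintype.card α - r) = (𝒜 # r)ᶜˢ := by
  ext s
  simp only [mem_slice, mem_compls, card_compl]
  have := s.card_le_univ
  constructor <;> rintro ⟨hs, h⟩ <;> exact ⟨hs, by omega⟩

lemma card_slice_div_choose_monotone_of_isUpperSet (h𝒜 : IsUpperSet (𝒜 : Set (Finset α)))
    (hij : i ≤ j) (hj : j ≤ Fintype.card α) :
    (#(𝒜 # i) : 𝕜) / (Fintype.card α).choose i ≤ #(𝒜 # j) / (Fintype.card α).choose j := by
  have key := card_slice_div_choose_antitone_of_isLowerSet (𝕜 := 𝕜) h𝒜.isLowerSet_compls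
    (Nat.sub_le_sub_left hij (Fintype.card α))
  rwa [slice_compls_card_sub i (hij.trans hj), slice_compls_card_sub j hj, card_compls,
    card_compls, Nat.choose_symm (hij.trans hj), Nat.choose_symm hj] at key

end Finset

section

variable {n : ℕ}

def ones (x : Fin n → Bool) : Finset (Fin n) := univ.filter fun i => x i = true

@[simp] lemma mem_ones {x : Fin n → Bool} {i : Fin n} : i ∈ ones x ↔ x i = true := by
  simp [ones]

lemma countOnes_eq_card_ones (x : Fin n → Bool) : countOnes x = #(ones x) := rfl

lemma countOnes_le (x : Fin n → Bool) : countOnes x ≤ n :=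
  (card_le_univ _).trans_eq (Fintype.card_fin n)

lemma ones_injective : Function.Injective (ones (n := n)) := by
  intro x y h
  funext i
  simpa using congrArg (i ∈ ·) h

lemma ones_not (x : Fin n → Bool) : ones (fun i => !x i) = (ones x)ᶜ := by
  ext i; simp

lemma countOnes_not (x : Fin n → Bool) : countOnes (fun i => !x i) = n - countOnes x := by
  rw [countOnes_eq_card_ones, countOnes_eq_card_ones, ones_not, card_compl, Fintype.card_fin]

lemma countOnes_decide_lt {k : ℕ} (hk : k ≤ n) :
    countOnes (fun i : Fin n => decide (i.val < k)) = k := by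
  simp [countOnes, Fin.card_filter_val_lt, hk]

lemma exists_perm_comp_eq_of_countOnes_eq {x y : Fin n → Bool} (h : countOnes x = countOnes y) :
    ∃ σ : Equiv.Perm (Fin n), x ∘ σ = y := by
  obtain ⟨σ, hσ⟩ := Equiv.Perm.exists_map_finset_eq (ones y) (ones x) h.symm
  refine ⟨σ, funext fun i => Bool.eq_iff_iff.2 ?_⟩
  rw [Function.comp_apply, ← mem_ones, ← hσ, mem_map_equiv, Equiv.symm_apply_apply, mem_ones]

lemma IsMonotoneSet.isUpperSet_image_ones {B : Finset (Fin n → Bool)} (hB : IsMonotoneSet B) :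
    IsUpperSet (B.image ones : Set (Finset (Fin n))) := by
  intro s t hst hs
  obtain ⟨x, hx, rfl⟩ := mem_image.1 (mem_coe.1 hs)
  refine mem_image.2 ⟨fun i => decide (i ∈ t), hB x hx _ fun i => ?_, by ext; simp⟩
  cases hi : x i
  · exact Bool.false_le _
  · simp [hst (mem_ones.2 hi)]

lemma card_filter_countOnes_eq (B : Finset (Fin n → Bool)) (k : ℕ) :
    #(B.filter fun x => countOnes x = k) = #((B.image ones) # k) := by
  rw [slice, filter_image, card_image_of_injective _ ones_injective]
  rfl

lemma IsMonotoneSet.card_filter_countOnes_le {B : Finset (Fin n → Bool)} (hB : IsMonotoneSet B)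
    {k : ℕ} (hk : 2 * k ≤ n) :
    #(B.filter fun x => countOnes x = k) ≤ #(B.filter fun x => countOnes x = n - k) := by
  have key := card_slice_div_choose_monotone_of_isUpperSet (𝕜 := ℚ) hB.isUpperSet_image_ones
    (i := k) (j := n - k) (by omega) (by simp)
  rw [Fintype.card_fin, Nat.choose_symm (by omega),
    div_le_div_iff_of_pos_right (by exact_mod_cast Nat.choose_pos (by omega))] at key
  rw [card_filter_countOnes_eq, card_filter_countOnes_eq]
  exact_mod_cast key

variable {μ : (Fin n → Bool) → ℝ}

lemma apply_eq_of_countOnes_eq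
    (hperm : ∀ σ : Equiv.Perm (Fin n), ∀ x : Fin n → Bool, μ (x ∘ σ) = μ x)
    {x y : Fin n → Bool} (h : countOnes x = countOnes y) : μ x = μ y := by
  obtain ⟨σ, rfl⟩ := exists_perm_comp_eq_of_countOnes_eq h
  exact (hperm σ x).symm

lemma sum_filter_countOnes_eq_card_mul
    (hperm : ∀ σ : Equiv.Perm (Fin n), ∀ x : Fin n → Bool, μ (x ∘ σ) = μ x)
    (B : Finset (Fin n → Bool)) {z : Fin n → Bool} {k : ℕ} (hz : countOnes z = k) :
    ∑ x ∈ B.filter (fun x => countOnes x = k), μ x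
      = #(B.filter fun x => countOnes x = k) * μ z := by
  rw [sum_eq_card_nsmul fun x hx =>
    apply_eq_of_countOnes_eq hperm ((mem_filter.1 hx).2.trans hz.symm), nsmul_eq_mul]

lemma sum_filter_countOnes_le_reflect (hnn : ∀ x, 0 ≤ μ x)
    (hperm : ∀ σ : Equiv.Perm (Fin n), ∀ x : Fin n → Bool, μ (x ∘ σ) = μ x)
    (hflip : ∀ x : Fin n → Bool, μ (fun i => !x i) = μ x) {B : Finset (Fin n → Bool)}
    (hB : IsMonotoneSet B) {k : ℕ} (hk : 2 * k ≤ n) :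
    ∑ x ∈ B.filter (fun x => countOnes x = k), μ x
      ≤ ∑ x ∈ B.filter (fun x => countOnes x = n - k), μ x := by
  have hz := countOnes_decide_lt (n := n) (k := k) (by omega)
  rw [sum_filter_countOnes_eq_card_mul hperm B hz,
    sum_filter_countOnes_eq_card_mul hperm B (by rw [countOnes_not, hz]), hflip]
  exact mul_le_mul_of_nonneg_right (mod_cast hB.card_filter_countOnes_le hk) (hnn _)

lemma sum_filter_countOnes_eq_sum_range {M : Type*} [AddCommMonoid M] (f : (Fin n → Bool) → M)
    (B : Finset (Fin n → Bool)) (P : ℕ → Prop) [DecidablePred P] :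
    ∑ x ∈ B.filter (fun x => P (countOnes x)), f x
      = ∑ k ∈ (range (n + 1)).filter P, ∑ x ∈ B.filter (fun x => countOnes x = k), f x := by
  rw [← sum_fiberwise_of_maps_to (g := countOnes) fun x hx =>
    mem_filter.2 ⟨mem_range.2 (Nat.lt_succ_of_le (countOnes_le x)), (mem_filter.1 hx).2⟩]
  refine sum_congr rfl fun k hk => sum_congr ?_ fun _ _ => rfl
  rw [filter_filter]
  exact filter_congr fun x _ => and_iff_right_of_imp fun hx => hx ▸ (mem_filter.1 hk).2

end

theorem mass_transport_symmetric_general {n : ℕ} (μ : (Fin n → Bool) → ℝ)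
    (hnn : ∀ x, 0 ≤ μ x)
    (hperm : ∀ σ : Equiv.Perm (Fin n), ∀ x : Fin n → Bool, μ (x ∘ σ) = μ x)
    (hflip : ∀ x : Fin n → Bool, μ (fun i => !x i) = μ x)
    (B : Finset (Fin n → Bool)) (hB : IsMonotoneSet B) :
    ∑ x ∈ B.filter (fun x => n < 2 * countOnes x), μ x
      ≥ ∑ x ∈ B.filter (fun x => 2 * countOnes x < n), μ x := by
  rw [ge_iff_le, sum_filter_countOnes_eq_sum_range μ B (fun k => n < 2 * k),
    sum_filter_countOnes_eq_sum_range μ B (fun k => 2 * k < n)]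
  calc _ ≤ ∑ k ∈ (range (n + 1)).filter (fun k => 2 * k < n),
          ∑ x ∈ B.filter (fun x => countOnes x = n - k), μ x :=
        sum_le_sum fun k hk =>
          sum_filter_countOnes_le_reflect hnn hperm hflip hB (mem_filter.1 hk).2.le
    _ = _ := by
        refine sum_nbij' (n - ·) (n - ·) ?_ ?_ ?_ ?_ fun _ _ => rfl <;>
          intro k hk <;> simp only [mem_filter, mem_range] at hk ⊢ <;> omega

/-- If `μ` is a probability distribution on `{0,1}^n` invariant under all
coordinate permutations and under the global flip `x ↦ 1 - x`, then for every
monotone `B`, `μ(B ∩ {∑ x_i > n/2}) ≥ μ(B ∩ {∑ x_i < n/2})`. -/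
theorem mass_transport_symmetric {n : ℕ} (μ : (Fin n → Bool) → ℝ)
    (hnn : ∀ x, 0 ≤ μ x) (hsum : ∑ x : Fin n → Bool, μ x = 1)
    (hperm : ∀ σ : Equiv.Perm (Fin n), ∀ x : Fin n → Bool, μ (x ∘ σ) = μ x)
    (hflip : ∀ x : Fin n → Bool, μ (fun i => !x i) = μ x)
    (B : Finset (Fin n → Bool)) (hB : IsMonotoneSet B) :
    ∑ x ∈ B.filter (fun x => n < 2 * countOnes x), μ x
      ≥ ∑ x ∈ B.filter (fun x => 2 * countOnes x < n), μ x :=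
  mass_transport_symmetric_general μ hnn hperm hflip B hB
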